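/- arXiv:math/0608259 — 2 statements merged into one kernel-verified Lean document; each statement's English description precedes it below -/
import Mathlib

section
/- Let X ⊆ Σ^ℤ and X̃ ⊆ Σ̃^ℤ be topologically conjugate subshifts, and suppose X̃ has property (D). Then X has property (D). -/
open Set Filter Topology

/-! Basic symbolic dynamics notions.

* The alphabet is a nonempty finite type `A` with the discrete topology; `A^ℤ` and `A^ℕ`
  carry the product topology.
* A left-infinite sequence `x⁻ = (x_i)_{i ≤ 0}` is encoded as `u : ℕ → A` with `u n = x (-n)`.
* Finite words are lists, read left to right.
-/

/-- The shift `S`. -/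
def shiftMap {A : Type*} (x : ℤ → A) : ℤ → A := fun i => x (i + 1)

/-- A subshift: a nonempty closed shift-invariant subset of `A^ℤ`. -/
def IsSubshift {A : Type*} [TopologicalSpace A] (X : Set (ℤ → A)) : Prop :=
  X.Nonempty ∧ IsClosed X ∧ shiftMap '' X = X

/-- `X⁻`: the left-infinite rays of points of `X` (encoded via `u n = x (-n)`). -/
def Xminus {A : Type*} (X : Set (ℤ → A)) : Set (ℕ → A) :=
  {u | ∃ x ∈ X, ∀ n : ℕ, u n = x (-(n : ℤ))}

/-- The word `w` occurs in `x` (as a block of consecutive coordinates). -/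
def Occurs {A : Type*} (w : List A) (x : ℤ → A) : Prop :=
  ∃ i : ℤ, ∀ j : Fin w.length, x (i + ((j : ℕ) : ℤ)) = w.get j

/-- A finite word is admissible for `X` if it occurs in some point of `X`. -/
def Admissible {A : Type*} (X : Set (ℤ → A)) (w : List A) : Prop :=
  ∃ x ∈ X, Occurs w x

/-- The left ray `u` ends in the word `w`, i.e. `(x_{-k},…,x_0) = w` where `|w| = k+1`. -/
def EndsIn {A : Type*} (u : ℕ → A) (w : List A) : Prop :=
  ∀ j : Fin w.length, u (w.length - 1 - (j : ℕ)) = w.get j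

/-- `Γ₁⁺(x⁻)`: the letters that can follow the left ray `u` in `X`. -/
def Gamma1 {A : Type*} (X : Set (ℤ → A)) (u : ℕ → A) : Set A :=
  {σ | ∃ x ∈ X, (∀ n : ℕ, x (-(n : ℤ)) = u n) ∧ x 1 = σ}

/-- `x` carries the word `b` on the coordinate interval `[-(|b| - 1), 0]`. -/
def EndsAtZero {A : Type*} (x : ℤ → A) (b : List A) : Prop :=
  ∀ j : Fin b.length, x (((j : ℕ) : ℤ) - ((b.length : ℤ) - 1)) = b.get j

/-- `c ∈ ω⁺(b)`: every point of `X` carrying `b` ending at coordinate `0` can be modified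
on the positive coordinates so as to continue with the word `c`. -/
def OmegaWord {A : Type*} (X : Set (ℤ → A)) (b c : List A) : Prop :=
  ∀ x ∈ X, EndsAtZero x b →
    ∃ x' ∈ X, (∀ i : ℤ, i ≤ 0 → x' i = x i) ∧
      ∀ j : Fin c.length, x' (((j : ℕ) : ℤ) + 1) = c.get j

/-- `ω₁⁺(b)`. -/
def omega1 {A : Type*} (X : Set (ℤ → A)) (b : List A) : Set A :=
  {σ | OmegaWord X b [σ]}

/-- The word `(x_{-n},…,x_0)` read off the left ray `u`. -/
def lastWord {A : Type*} (u : ℕ → A) (n : ℕ) : List A :=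
  List.ofFn fun j : Fin (n + 1) => u (n - (j : ℕ))

/-- `Δ₁⁺(x⁻) = ⋃ₙ ω₁⁺((x_{-n},…,x_0))`. -/
def Delta1 {A : Type*} (X : Set (ℤ → A)) (u : ℕ → A) : Set A :=
  ⋃ n : ℕ, omega1 X (lastWord u n)

/-- Property g: `Δ₁⁺(x⁻) ≠ ∅` for every `x⁻ ∈ X⁻`. -/
def PropertyG {A : Type*} (X : Set (ℤ → A)) : Prop :=
  ∀ u ∈ Xminus X, (Delta1 X u).Nonempty

/-- A g-function for `X`, encoded as a total function `g : (ℕ → A) → A → ℝ`: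
continuity (of the restriction to the graph of `Γ₁⁺`, i.e. of the map on
`{(x⁻,σ) : σ ∈ Γ₁⁺(x⁻)}`), values in `[0,1]` there, and the normalization
`∑_{σ ∈ Γ₁⁺(x⁻)} g (x⁻, σ) = 1`. -/
def IsGFunction {A : Type*} [Fintype A] [TopologicalSpace A] (X : Set (ℤ → A))
    (g : (ℕ → A) → A → ℝ) : Prop :=
  ContinuousOn (fun p : (ℕ → A) × A => g p.1 p.2)
      {p : (ℕ → A) × A | p.1 ∈ Xminus X ∧ p.2 ∈ Gamma1 X p.1} ∧
  (∀ u ∈ Xminus X, ∀ σ ∈ Gamma1 X u, g u σ ∈ Set.Icc (0 : ℝ) 1) ∧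
  (∀ u ∈ Xminus X, ∑ σ : A, (Gamma1 X u).indicator (g u) σ = 1)

/-- Property (D): for every admissible word `b` and letter `σ` with `bσ` admissible there
is a word `a` with `ab` admissible and `σ ∈ ω₁⁺(ab)`. -/
def PropertyD {A : Type*} (X : Set (ℤ → A)) : Prop :=
  ∀ (b : List A) (σ : A), b ≠ [] → Admissible X (b ++ [σ]) →
    ∃ a : List A, a ≠ [] ∧ Admissible X (a ++ b) ∧ σ ∈ omega1 X (a ++ b)

/-- Topological conjugacy: a homeomorphism between the subshifts commuting with the
shifts. -/
def Conjugate {A B : Type*} [TopologicalSpace A] [TopologicalSpace B]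
    (X : Set (ℤ → A)) (Y : Set (ℤ → B)) : Prop :=
  ∃ φ : X ≃ₜ Y, ∀ (x : X) (hx : shiftMap x.1 ∈ X),
    (φ ⟨shiftMap x.1, hx⟩).1 = shiftMap (φ x).1


section St12Aux

variable {A : Type*} {B : Type*}

/-- Shift by `k`. -/
def shiftBy (k : ℤ) (x : ℤ → A) : ℤ → A := fun i => x (i + k)

lemma shiftBy_shiftBy (k l : ℤ) (x : ℤ → A) :
    shiftBy k (shiftBy l x) = shiftBy (k + l) x := by
  funext i; simp [shiftBy, add_assoc]

lemma shiftBy_zero (x : ℤ → A) : shiftBy 0 x = x := by funext i; simp [shiftBy]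

lemma mem_shiftBy [TopologicalSpace A] {X : Set (ℤ → A)} (hX : IsSubshift X) (k : ℤ)
    {x : ℤ → A} (hx : x ∈ X) : shiftBy k x ∈ X := by
  have h1 : ∀ z ∈ X, shiftBy 1 z ∈ X := by
    intro z hz
    have : shiftMap z ∈ shiftMap '' X := ⟨z, hz, rfl⟩
    rwa [hX.2.2] at this
  have h2 : ∀ z ∈ X, shiftBy (-1) z ∈ X := by
    intro z hz
    rw [← hX.2.2] at hz
    obtain ⟨z₀, hz₀, he⟩ := hz
    have : shiftBy (-1) z = z₀ := by
      funext i
      rw [← he]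
      show z₀ (i + -1 + 1) = z₀ i
      ring_nf
    rwa [this]
  induction k using Int.induction_on with
  | zero => rwa [shiftBy_zero]
  | succ k ih =>
      have : shiftBy ((k : ℤ) + 1) x = shiftBy 1 (shiftBy k x) := by
        rw [shiftBy_shiftBy]; ring_nf
      rw [this]; exact h1 _ ih
  | pred k ih =>
      have : shiftBy (-(k : ℤ) - 1) x = shiftBy (-1) (shiftBy (-k) x) := by
        rw [shiftBy_shiftBy]; ring_nf
      rw [this]; exact h2 _ ih

/-- The word of `x` of length `l` ending at position `p`. -/
def wordEnd (x : ℤ → A) (p : ℤ) (l : ℕ) : List A :=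
  List.ofFn fun j : Fin l => x (p + 1 - l + j)

@[simp] lemma length_wordEnd (x : ℤ → A) (p : ℤ) (l : ℕ) :
    (wordEnd x p l).length = l := by simp [wordEnd]

lemma getElem_wordEnd (x : ℤ → A) (p : ℤ) (l : ℕ) (j : ℕ) (hj : j < (wordEnd x p l).length) :
    (wordEnd x p l)[j] = x (p + 1 - l + j) := by
  simp [wordEnd] at hj ⊢

lemma wordEnd_ne_nil (x : ℤ → A) (p : ℤ) {l : ℕ} (hl : 0 < l) : wordEnd x p l ≠ [] := by
  intro h
  have := length_wordEnd x p l
  rw [h] at this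
  simp at this
  omega

lemma wordEnd_append (x : ℤ → A) (p : ℤ) (l₁ l₂ : ℕ) :
    wordEnd x p (l₁ + l₂) = wordEnd x (p - l₂) l₁ ++ wordEnd x p l₂ := by
  refine List.ext_getElem (by simp) ?_
  intro j hj hj'
  rcases lt_or_ge j l₁ with h | h
  · rw [List.getElem_append_left (by simpa using h)]
    rw [getElem_wordEnd, getElem_wordEnd]
    push_cast
    ring_nf
  · rw [List.getElem_append_right (by simpa using h)]
    rw [getElem_wordEnd, getElem_wordEnd]
    simp only [length_wordEnd] at hj ⊢
    push_cast [Int.ofNat_sub h]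
    ring_nf

lemma wordEnd_congr {x x' : ℤ → A} {p : ℤ} {l : ℕ}
    (h : ∀ i : ℤ, p + 1 - l ≤ i → i ≤ p → x i = x' i) :
    wordEnd x p l = wordEnd x' p l := by
  refine List.ext_getElem (by simp) ?_
  intro j hj hj'
  rw [getElem_wordEnd, getElem_wordEnd]
  refine h _ (by omega) (by simp [length_wordEnd] at hj; omega)

lemma eq_on_of_wordEnd_eq {x x' : ℤ → A} {p : ℤ} {l : ℕ}
    (h : wordEnd x p l = wordEnd x' p l) :
    ∀ i : ℤ, p + 1 - l ≤ i → i ≤ p → x i = x' i := by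
  intro i h1 h2
  have hj : (i - (p + 1 - l)).toNat < l := by omega
  have e1 := getElem_wordEnd x p l (i - (p + 1 - l)).toNat (by simpa using hj)
  have e2 := getElem_wordEnd x' p l (i - (p + 1 - l)).toNat (by simpa using hj)
  have e0 : (wordEnd x p l)[(i - (p + 1 - l)).toNat]'(by simpa using hj)
      = (wordEnd x' p l)[(i - (p + 1 - l)).toNat]'(by simpa using hj) :=
    List.getElem_of_eq h _
  have e3 := (e0.symm.trans e1).symm.trans e2
  have he : p + 1 - (l:ℤ) + ((i - (p + 1 - l)).toNat : ℤ) = i := by omega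
  rwa [he] at e3

lemma wordEnd_shiftBy (x : ℤ → A) (k p : ℤ) (l : ℕ) :
    wordEnd (shiftBy k x) p l = wordEnd x (p + k) l := by
  refine List.ext_getElem (by simp) ?_
  intro j hj hj'
  rw [getElem_wordEnd, getElem_wordEnd]
  show x (p + 1 - l + j + k) = x (p + k + 1 - l + j)
  ring_nf

end St12Aux
section St12Aux2

variable {A : Type*} {B : Type*}

lemma endsAtZero_iff_eq {x : ℤ → A} {w : List A} :
    EndsAtZero x w ↔ w = wordEnd x 0 w.length := by
  constructor
  · intro h
    refine List.ext_getElem (by simp) ?_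
    intro j hj hj'
    rw [getElem_wordEnd]
    have := h ⟨j, hj⟩
    simp only [List.get_eq_getElem] at this
    rw [← this]
    congr 1
    omega
  · intro h j
    have hj : (j : ℕ) < (wordEnd x 0 w.length).length := by simp
    have e2 : w.get j = (wordEnd x 0 w.length)[(j:ℕ)]'hj := by
      simp only [List.get_eq_getElem]
      exact List.getElem_of_eq h _
    rw [e2, getElem_wordEnd]
    congr 1
    omega

lemma endsAtZero_wordEnd (x : ℤ → A) (p : ℤ) (l : ℕ) :
    EndsAtZero (shiftBy p x) (wordEnd x p l) := by
  rw [endsAtZero_iff_eq, length_wordEnd, wordEnd_shiftBy]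
  congr 1
  omega

lemma admissible_wordEnd [TopologicalSpace A] {X : Set (ℤ → A)} {x : ℤ → A} (hx : x ∈ X)
    (p : ℤ) (l : ℕ) : Admissible X (wordEnd x p l) := by
  refine ⟨x, hx, p + 1 - l, ?_⟩
  intro j
  rw [List.get_eq_getElem, getElem_wordEnd]

lemma exists_endsAtZero_of_admissible [TopologicalSpace A] {X : Set (ℤ → A)}
    (hX : IsSubshift X) {w : List A} (h : Admissible X w) :
    ∃ x ∈ X, EndsAtZero x w := by
  obtain ⟨x, hx, i, hocc⟩ := h
  refine ⟨shiftBy (i + w.length - 1) x, mem_shiftBy hX _ hx, ?_⟩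
  intro j
  have := hocc j
  rw [← this]
  show x ((j:ℤ) - ((w.length:ℤ) - 1) + (i + w.length - 1)) = _
  ring_nf

lemma endsAtZero_append_right {x : ℤ → A} {v w : List A}
    (h : EndsAtZero x (v ++ w)) : EndsAtZero x w := by
  rw [endsAtZero_iff_eq] at h ⊢
  rw [List.length_append] at h
  rw [wordEnd_append] at h
  exact (List.append_inj' h (by simp)).2

lemma omega1_mono [TopologicalSpace A] {X : Set (ℤ → A)} (v : List A) {w : List A} {σ : A}
    (h : σ ∈ omega1 X w) : σ ∈ omega1 X (v ++ w) := by
  intro x hx he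
  exact h x hx (endsAtZero_append_right he)

lemma endsAtZero_congr {x x' : ℤ → A} {w : List A}
    (h : ∀ i : ℤ, 1 - (w.length : ℤ) ≤ i → i ≤ 0 → x i = x' i)
    (he : EndsAtZero x w) : EndsAtZero x' w := by
  rw [endsAtZero_iff_eq] at he ⊢
  exact he.trans (wordEnd_congr (fun i h1 h2 => h i (by omega) h2))

end St12Aux2
section St12Aux3

variable {A : Type*} {B : Type*} [TopologicalSpace A] [TopologicalSpace B]

lemma commute_shiftBy {X : Set (ℤ → A)} {Y : Set (ℤ → B)} (hX : IsSubshift X)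
    (φ : X ≃ₜ Y)
    (hφ : ∀ (x : X) (hx : shiftMap x.1 ∈ X), (φ ⟨shiftMap x.1, hx⟩).1 = shiftMap (φ x).1)
    (k : ℤ) (x : X) :
    (φ ⟨shiftBy k x.1, mem_shiftBy hX k x.2⟩).1 = shiftBy k (φ x).1 := by
  induction k using Int.induction_on with
  | zero =>
      have h0 : (⟨shiftBy 0 x.1, mem_shiftBy hX 0 x.2⟩ : X) = x :=
        Subtype.ext (shiftBy_zero _)
      rw [h0, shiftBy_zero]
  | succ k ih =>
      have hmem : shiftBy k x.1 ∈ X := mem_shiftBy hX k x.2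
      have heq : shiftBy ((k : ℤ) + 1) x.1 = shiftMap (shiftBy k x.1) := by
        funext i; show x.1 (i + (k + 1)) = x.1 (i + 1 + k); ring_nf
      have hm2 : shiftMap (shiftBy k x.1) ∈ X := heq ▸ mem_shiftBy hX _ x.2
      have e1 : (⟨shiftBy ((k:ℤ)+1) x.1, mem_shiftBy hX _ x.2⟩ : X)
          = ⟨shiftMap (shiftBy k x.1), hm2⟩ := Subtype.ext heq
      rw [e1, hφ ⟨shiftBy k x.1, hmem⟩ hm2]
      rw [ih]
      funext i
      show (φ x).1 (i + 1 + k) = (φ x).1 (i + (k + 1))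
      ring_nf
  | pred k ih =>
      have hmem : shiftBy (-(k : ℤ) - 1) x.1 ∈ X := mem_shiftBy hX _ x.2
      have heq : shiftMap (shiftBy (-(k:ℤ) - 1) x.1) = shiftBy (-(k:ℤ)) x.1 := by
        funext i; show x.1 (i + 1 + (-(k:ℤ) - 1)) = x.1 (i + -(k:ℤ)); ring_nf
      have hm2 : shiftMap (shiftBy (-(k:ℤ)-1) x.1) ∈ X := heq ▸ mem_shiftBy hX _ x.2
      have e1 := hφ ⟨shiftBy (-(k:ℤ)-1) x.1, hmem⟩ hm2
      have e2 : (⟨shiftMap (shiftBy (-(k:ℤ)-1) x.1), hm2⟩ : X)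
          = ⟨shiftBy (-(k:ℤ)) x.1, mem_shiftBy hX _ x.2⟩ := Subtype.ext heq
      rw [e2, ih] at e1
      -- e1 : shiftBy (-k) (φ x).1 = shiftMap (φ ⟨shiftBy (-k-1) x.1, hmem⟩).1
      funext i
      have := congrFun e1 (i + -1)
      show (φ ⟨shiftBy (-(k:ℤ)-1) x.1, mem_shiftBy hX _ x.2⟩).1 i = (φ x).1 (i + (-(k:ℤ)-1))
      have hi : i + -1 + 1 = i := by ring
      rw [shiftMap] at this
      simp only [hi] at this
      rw [← this]
      show (φ x).1 (i + -1 + -(k:ℤ)) = (φ x).1 (i + (-(k:ℤ)-1))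
      ring_nf

lemma commute_shiftBy_symm {X : Set (ℤ → A)} {Y : Set (ℤ → B)}
    (hX : IsSubshift X) (hY : IsSubshift Y) (φ : X ≃ₜ Y)
    (hφ : ∀ (x : X) (hx : shiftMap x.1 ∈ X), (φ ⟨shiftMap x.1, hx⟩).1 = shiftMap (φ x).1)
    (k : ℤ) (y : Y) :
    (φ.symm ⟨shiftBy k y.1, mem_shiftBy hY k y.2⟩).1 = shiftBy k (φ.symm y).1 := by
  set x := φ.symm y with hx
  have h1 : φ x = y := φ.apply_symm_apply y
  have h2 := commute_shiftBy hX φ hφ k x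
  rw [h1] at h2
  have h3 : (⟨shiftBy k y.1, mem_shiftBy hY k y.2⟩ : Y)
      = φ ⟨shiftBy k x.1, mem_shiftBy hX k x.2⟩ := by
    refine Subtype.ext ?_
    rw [h2]
  rw [h3, φ.symm_apply_apply]

/-- Continuity + compactness gives a uniform coding radius at coordinate 0. -/
lemma radius0 {A B : Type*} [TopologicalSpace A] [DiscreteTopology A] [Finite A]
    [TopologicalSpace B] [DiscreteTopology B]
    {X : Set (ℤ → A)} (hXcl : IsClosed X) (f : X → B) (hf : Continuous f) :
    ∃ N : ℕ, ∀ x x' : X, (∀ i : ℤ, -(N:ℤ) ≤ i → i ≤ N → x.1 i = x'.1 i) → f x = f x' := by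
  haveI : CompactSpace X := isCompact_iff_compactSpace.mp hXcl.isCompact
  have key : ∀ x : X, ∃ n : ℕ, ∀ z : X,
      (∀ i : ℤ, -(n:ℤ) ≤ i → i ≤ n → z.1 i = x.1 i) → f z = f x := by
    intro x
    have h1 : f ⁻¹' {f x} ∈ nhds x :=
      hf.continuousAt.preimage_mem_nhds ((isOpen_discrete _).mem_nhds rfl)
    rw [nhds_subtype, Filter.mem_comap] at h1
    obtain ⟨U, hU, hUsub⟩ := h1
    rw [nhds_pi, Filter.mem_pi] at hU
    obtain ⟨I, hIfin, t, ht, hIt⟩ := hU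
    refine ⟨hIfin.toFinset.sup (fun i => i.natAbs), fun z hz => ?_⟩
    have hzU : z.1 ∈ U := by
      apply hIt
      intro i hi
      have hb : i.natAbs ≤ hIfin.toFinset.sup (fun i => i.natAbs) :=
        Finset.le_sup (hIfin.mem_toFinset.mpr hi)
      rw [hz i (by omega) (by omega)]
      exact mem_of_mem_nhds (ht i)
    exact hUsub hzU
  choose n hn using key
  set U : X → Set X := fun x => {z : X | ∀ i : ℤ, -(n x : ℤ) ≤ i → i ≤ n x → z.1 i = x.1 i}
    with hUdef
  have hUopen : ∀ x : X, IsOpen (U x) := by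
    intro x
    have he : U x = ⋂ i ∈ Finset.Icc (-(n x : ℤ)) (n x), {z : X | z.1 i = x.1 i} := by
      ext z
      simp only [hUdef, Set.mem_setOf_eq, Set.mem_iInter, Finset.mem_Icc]
      constructor
      · intro h i hi; exact h i hi.1 hi.2
      · intro h i h1 h2; exact h i ⟨h1, h2⟩
    rw [he]
    refine isOpen_biInter_finset (fun i _ => ?_)
    have hc : Continuous fun z : X => z.1 i := (continuous_apply i).comp continuous_subtype_val
    exact (isOpen_discrete {x.1 i}).preimage hc
  obtain ⟨s, -, hs⟩ := IsCompact.elim_nhds_subcover isCompact_univ U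
    (fun x _ => (hUopen x).mem_nhds (fun i _ _ => rfl))
  refine ⟨s.sup n, fun x x' hxx' => ?_⟩
  have hx : x ∈ ⋃ x₀ ∈ s, U x₀ := hs (Set.mem_univ x)
  rw [Set.mem_iUnion₂] at hx
  obtain ⟨x₀, hx₀s, hx₀⟩ := hx
  have hns : n x₀ ≤ s.sup n := Finset.le_sup hx₀s
  have h1 : f x = f x₀ := hn x₀ x hx₀
  have h2 : f x' = f x₀ := by
    refine hn x₀ x' (fun i hi1 hi2 => ?_)
    rw [← hxx' i (by omega) (by omega)]
    exact hx₀ i hi1 hi2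
  rw [h1, h2]

end St12Aux3
section St12Aux4

variable {A : Type*} {B : Type*}

lemma exists_blockRadius [Fintype A] [TopologicalSpace A] [DiscreteTopology A]
    [Fintype B] [TopologicalSpace B] [DiscreteTopology B]
    {X : Set (ℤ → A)} {Y : Set (ℤ → B)} (hX : IsSubshift X) (hY : IsSubshift Y)
    (φ : X ≃ₜ Y)
    (hφ : ∀ (x : X) (hx : shiftMap x.1 ∈ X), (φ ⟨shiftMap x.1, hx⟩).1 = shiftMap (φ x).1) :
    ∃ N : ℕ, 1 ≤ N ∧
      (∀ (x x' : X) (i₀ : ℤ), (∀ i : ℤ, i₀ - N ≤ i → i ≤ i₀ + N → x.1 i = x'.1 i) →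
        (φ x).1 i₀ = (φ x').1 i₀) ∧
      (∀ (y y' : Y) (i₀ : ℤ), (∀ i : ℤ, i₀ - N ≤ i → i ≤ i₀ + N → y.1 i = y'.1 i) →
        (φ.symm y).1 i₀ = (φ.symm y').1 i₀) := by
  obtain ⟨N₁, hN₁⟩ := radius0 hX.2.1 (fun x : X => (φ x).1 0)
    ((continuous_apply (0:ℤ)).comp (continuous_subtype_val.comp φ.continuous))
  obtain ⟨N₂, hN₂⟩ := radius0 hY.2.1 (fun y : Y => (φ.symm y).1 0)
    ((continuous_apply (0:ℤ)).comp (continuous_subtype_val.comp φ.symm.continuous))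
  refine ⟨max (max N₁ N₂) 1, le_max_right _ _, ?_, ?_⟩
  · set N := max (max N₁ N₂) 1
    intro x x' i₀ hagree
    have e1 : (φ x).1 i₀ = (φ ⟨shiftBy i₀ x.1, mem_shiftBy hX i₀ x.2⟩).1 0 := by
      rw [commute_shiftBy hX φ hφ]
      show (φ x).1 i₀ = (φ x).1 (0 + i₀)
      norm_num
    have e2 : (φ x').1 i₀ = (φ ⟨shiftBy i₀ x'.1, mem_shiftBy hX i₀ x'.2⟩).1 0 := by
      rw [commute_shiftBy hX φ hφ]
      show (φ x').1 i₀ = (φ x').1 (0 + i₀)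
      norm_num
    rw [e1, e2]
    refine hN₁ _ _ (fun i h1 h2 => ?_)
    show x.1 (i + i₀) = x'.1 (i + i₀)
    have hle : (N₁ : ℤ) ≤ N := by
      have := le_max_left N₁ N₂
      have := le_max_left (max N₁ N₂) 1
      omega
    exact hagree _ (by omega) (by omega)
  · set N := max (max N₁ N₂) 1
    intro y y' i₀ hagree
    have e1 : (φ.symm y).1 i₀ = (φ.symm ⟨shiftBy i₀ y.1, mem_shiftBy hY i₀ y.2⟩).1 0 := by
      rw [commute_shiftBy_symm hX hY φ hφ]
      show (φ.symm y).1 i₀ = (φ.symm y).1 (0 + i₀)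
      norm_num
    have e2 : (φ.symm y').1 i₀ = (φ.symm ⟨shiftBy i₀ y'.1, mem_shiftBy hY i₀ y'.2⟩).1 0 := by
      rw [commute_shiftBy_symm hX hY φ hφ]
      show (φ.symm y').1 i₀ = (φ.symm y').1 (0 + i₀)
      norm_num
    rw [e1, e2]
    refine hN₂ _ _ (fun i h1 h2 => ?_)
    show y.1 (i + i₀) = y'.1 (i + i₀)
    have hle : (N₂ : ℤ) ≤ N := by
      have := le_max_right N₁ N₂
      have := le_max_left (max N₁ N₂) 1
      omega
    exact hagree _ (by omega) (by omega)

/-- Iterated application of property (D) along a continuation word. -/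
lemma chainD [TopologicalSpace B] {Y : Set (ℤ → B)} (hY : IsSubshift Y) (hD : PropertyD Y)
    (cw : List B) :
    ∀ (w : List B), w ≠ [] → Admissible Y (w ++ cw) →
    ∃ a : List B, a ≠ [] ∧ Admissible Y (a ++ w) ∧
      ∀ (n : ℕ) (hn : n < cw.length), cw[n] ∈ omega1 Y (a ++ (w ++ cw.take n)) := by
  induction cw using List.reverseRecOn with
  | nil =>
      intro w hw hadm
      rw [List.append_nil] at hadm
      obtain ⟨x, hxY, hxe⟩ := exists_endsAtZero_of_admissible hY hadm
      refine ⟨wordEnd x (-(w.length : ℤ)) 1, wordEnd_ne_nil _ _ (by norm_num), ?_, ?_⟩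
      · have hb : w = wordEnd x 0 w.length := endsAtZero_iff_eq.mp hxe
        have h0 : wordEnd x 0 (1 + w.length) = wordEnd x ((0:ℤ) - (w.length:ℤ)) 1
            ++ wordEnd x 0 w.length := wordEnd_append x 0 1 w.length
        have h1 : (0 : ℤ) - (w.length:ℤ) = -(w.length:ℤ) := by ring
        rw [h1, ← hb] at h0
        rw [← h0]
        exact admissible_wordEnd hxY 0 _
      · intro n hn; exact absurd hn (by simp)
  | append_singleton c' σ ih =>
      intro w hw hadm
      have hadm' : Admissible Y ((w ++ c') ++ [σ]) := by
        rwa [List.append_assoc]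
      obtain ⟨a₀, ha₀ne, ha₀adm, hσ⟩ := hD (w ++ c') σ (by simp [hw]) hadm'
      have ha₀adm' : Admissible Y ((a₀ ++ w) ++ c') := by
        rwa [← List.append_assoc] at ha₀adm
      obtain ⟨a₁, ha₁ne, ha₁adm, hchain⟩ := ih (a₀ ++ w) (by simp [ha₀ne]) ha₀adm'
      refine ⟨a₁ ++ a₀, by simp [ha₁ne], by rwa [List.append_assoc], ?_⟩
      intro n hn
      rcases lt_or_ge n c'.length with h | h
      · have hget : (c' ++ [σ])[n]'hn = c'[n]'h := List.getElem_append_left h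
        have htake : (c' ++ [σ]).take n = c'.take n := by
          rw [List.take_append_of_le_length (by omega)]
        rw [hget, htake]
        have := hchain n h
        have heq : a₁ ++ ((a₀ ++ w) ++ c'.take n) = (a₁ ++ a₀) ++ (w ++ c'.take n) := by
          simp [List.append_assoc]
        rwa [heq] at this
      · have hn' : n = c'.length := by
          simp at hn; omega
        subst hn'
        have hget : (c' ++ [σ])[c'.length]'hn = σ := by simp
        have htake : (c' ++ [σ]).take c'.length = c' := by
          rw [List.take_append_of_le_length (by omega), List.take_length]
        rw [hget, htake]
        have h2 : σ ∈ omega1 Y (a₁ ++ (a₀ ++ (w ++ c'))) := omega1_mono a₁ hσ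
        have heq : a₁ ++ (a₀ ++ (w ++ c')) = (a₁ ++ a₀) ++ (w ++ c') := by
          simp [List.append_assoc]
        rwa [heq] at h2

/-- Iterated extension along a chain of `omega1` memberships. -/
lemma extend_chain [TopologicalSpace B] {Y : Set (ℤ → B)} (hY : IsSubshift Y) (W : List B)
    (cw : List B)
    (hchain : ∀ (n : ℕ) (hn : n < cw.length), cw[n] ∈ omega1 Y (W ++ cw.take n)) :
    ∀ z ∈ Y, EndsAtZero z W →
    ∃ z' ∈ Y, (∀ i : ℤ, i ≤ 0 → z' i = z i) ∧
      ∀ (n : ℕ) (hn : n < cw.length), z' ((n : ℤ) + 1) = cw[n] := by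
  induction cw using List.reverseRecOn with
  | nil =>
      intro z hz hze
      exact ⟨z, hz, fun i _ => rfl, fun n hn => by simp at hn⟩
  | append_singleton c' σ ih =>
      intro z hz hze
      have hchain' : ∀ (n : ℕ) (hn : n < c'.length), c'[n] ∈ omega1 Y (W ++ c'.take n) := by
        intro n hn
        have h2 := hchain n (by simp; omega)
        rwa [List.getElem_append_left hn,
          List.take_append_of_le_length (by omega)] at h2
      obtain ⟨z₁, hz₁Y, hz₁le, hz₁c⟩ := ih hchain' z hz hze
      set L := c'.length with hL
      have hσ : σ ∈ omega1 Y (W ++ c') := by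
        have h2 := hchain c'.length (by simp)
        rw [List.take_append_of_le_length (le_refl _), List.take_length] at h2
        simpa using h2
      have hsh : shiftBy (L : ℤ) z₁ ∈ Y := mem_shiftBy hY _ hz₁Y
      have hE : EndsAtZero (shiftBy (L : ℤ) z₁) (W ++ c') := by
        intro j
        have hjlt : (j : ℕ) < W.length + L := by
          have := j.isLt; simpa using this
        have hlen : ((W ++ c').length : ℤ) = (W.length : ℤ) + c'.length := by
          push_cast [List.length_append]; ring
        show z₁ ((j:ℤ) - (((W ++ c').length : ℤ) - 1) + L) = _
        rcases lt_or_ge (j : ℕ) W.length with h | h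
        · have harg : (j:ℤ) - (((W ++ c').length:ℤ) - 1) + L = (j:ℤ) - ((W.length:ℤ) - 1) := by
            rw [hlen]; push_cast; omega
          rw [harg]
          have harg2 : (j:ℤ) - ((W.length:ℤ) - 1) ≤ 0 := by omega
          rw [hz₁le _ harg2]
          have := hze ⟨(j:ℕ), h⟩
          simp only [List.get_eq_getElem] at this ⊢
          rw [List.getElem_append_left h]
          exact this
        · set m : ℕ := (j : ℕ) - W.length with hm
          have hmL : m < L := by omega
          have harg : (j:ℤ) - (((W ++ c').length:ℤ) - 1) + L = (m:ℤ) + 1 := by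
            rw [hlen]; push_cast; omega
          rw [harg, hz₁c m hmL]
          simp only [List.get_eq_getElem]
          rw [List.getElem_append_right h]
      obtain ⟨z₂, hz₂Y, hz₂le, hz₂c⟩ := hσ (shiftBy (L:ℤ) z₁) hsh hE
      have hz₂1 : z₂ 1 = σ := by
        have := hz₂c ⟨0, by norm_num⟩
        simpa using this
      refine ⟨shiftBy (-(L:ℤ)) z₂, mem_shiftBy hY _ hz₂Y, ?_, ?_⟩
      · intro i hi
        show z₂ (i + -(L:ℤ)) = z i
        rw [hz₂le _ (by omega)]
        show z₁ (i + -(L:ℤ) + L) = z i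
        have : i + -(L:ℤ) + L = i := by ring
        rw [this]
        exact hz₁le i hi
      · intro n hn
        have hn2 : n < L + 1 := by simpa using hn
        show z₂ ((n:ℤ) + 1 + -(L:ℤ)) = _
        rcases lt_or_ge n L with h | h
        · rw [hz₂le _ (by omega)]
          show z₁ ((n:ℤ) + 1 + -(L:ℤ) + L) = _
          have harg : (n:ℤ) + 1 + -(L:ℤ) + L = (n:ℤ) + 1 := by ring
          rw [harg, hz₁c n h]
          rw [List.getElem_append_left h]
        · have harg : (n:ℤ) + 1 + -(L:ℤ) = 1 := by omega
          rw [harg, hz₂1]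
          rw [List.getElem_append_right (show c'.length ≤ n by omega)]
          simp [show n - c'.length = 0 by omega]

end St12Aux4
/-- Proposition 4.3.  Property (D) is invariant under topological
conjugacy. -/
theorem stmt12 {A : Type*} {B : Type*}
    [Fintype A] [Nonempty A] [TopologicalSpace A] [DiscreteTopology A]
    [Fintype B] [Nonempty B] [TopologicalSpace B] [DiscreteTopology B]
    (X : Set (ℤ → A)) (Y : Set (ℤ → B)) (hX : IsSubshift X) (hY : IsSubshift Y)
    (hconj : Conjugate X Y) (hD : PropertyD Y) :
    PropertyD X := by
  obtain ⟨φ, hφ⟩ := hconj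
  obtain ⟨N, hN1, hbφ, hbψ⟩ := exists_blockRadius hX hY φ hφ
  intro b σ hb hadm
  set k1 := b.length with hk1
  have hk1pos : 0 < k1 := List.length_pos_iff.mpr hb
  -- normalize the occurrence of b ++ [σ]
  obtain ⟨x₁, hx₁X, hx₁e⟩ := exists_endsAtZero_of_admissible hX hadm
  set x₀ := shiftBy (-1) x₁ with hx₀def
  have hx₀X : x₀ ∈ X := mem_shiftBy hX _ hx₁X
  have he1 : b ++ [σ] = wordEnd x₁ 0 (k1 + 1) := by
    have h0 := endsAtZero_iff_eq.mp hx₁e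
    have hlen : (b ++ [σ]).length = k1 + 1 := by simp [hk1]
    rwa [hlen] at h0
  have he2 : wordEnd x₁ 0 (k1 + 1) = wordEnd x₁ ((0:ℤ) - (1:ℕ)) k1 ++ wordEnd x₁ 0 1 :=
    wordEnd_append x₁ 0 k1 1
  have hsplit := he1.trans he2
  have hbx₁ : b = wordEnd x₁ ((0:ℤ) - (1:ℕ)) k1 :=
    (List.append_inj hsplit (by simp [hk1])).1
  have hσx₁ : [σ] = wordEnd x₁ 0 1 :=
    (List.append_inj hsplit (by simp [hk1])).2
  have hbx₀ : b = wordEnd x₀ 0 k1 := by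
    rw [hx₀def, wordEnd_shiftBy]
    rw [hbx₁]
    norm_num
  have hx₀b : EndsAtZero x₀ b := by
    rw [endsAtZero_iff_eq, ← hk1]
    exact hbx₀
  have hx₀σ : x₀ 1 = σ := by
    have h0 : (wordEnd x₁ 0 1)[0]'(by simp) = x₁ (0 + 1 - (1:ℕ) + (0:ℕ)) :=
      getElem_wordEnd x₁ 0 1 0 (by simp)
    have h1 : [σ][0]'(by simp) = (wordEnd x₁ 0 1)[0]'(by simp) := List.getElem_of_eq hσx₁ _
    simp only [List.getElem_singleton] at h1
    rw [h0] at h1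
    show x₁ (1 + -1) = σ
    rw [h1]
    norm_num
  -- pass to Y
  set xs : X := (⟨x₀, hx₀X⟩ : X) with hxs
  set yf := (φ xs).1 with hyf
  have hyY : yf ∈ Y := (φ xs).2
  set m := k1 + 2*N + 1 with hm
  set W := wordEnd yf (-(N:ℤ)) m with hW
  set cY := wordEnd yf ((N:ℤ)+1) (2*N+1) with hcdef
  have hclen : cY.length = 2*N+1 := by rw [hcdef]; simp
  have hcval : ∀ (n : ℕ) (hn : n < cY.length),
      cY[n]'hn = yf ((N:ℤ)+1+1-((2*N+1:ℕ):ℤ)+n) := by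
    intro n hn
    have hn' : n < (wordEnd yf ((N:ℤ)+1) (2*N+1)).length := by
      rw [← hcdef]; exact hn
    have h1 : cY[n]'hn = (wordEnd yf ((N:ℤ)+1) (2*N+1))[n]'hn' := List.getElem_of_eq hcdef _
    rw [h1, getElem_wordEnd]
  have hWc : wordEnd yf ((N:ℤ)+1) (m + (2*N+1)) = W ++ cY := by
    rw [wordEnd_append]
    have hpt : ((N:ℤ)+1) - ((2*N+1:ℕ):ℤ) = -(N:ℤ) := by push_cast; ring
    rw [hpt, ← hW, ← hcdef]
  have hWcadm : Admissible Y (W ++ cY) := hWc ▸ admissible_wordEnd hyY _ _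
  have hWne : W ≠ [] := by rw [hW]; exact wordEnd_ne_nil _ _ (by omega)
  obtain ⟨aY, haYne, haYadm, hcha⟩ := chainD hY hD cY W hWne hWcadm
  have hcha' : ∀ (n : ℕ) (hn : n < cY.length), cY[n] ∈ omega1 Y ((aY ++ W) ++ cY.take n) := by
    intro n hn
    have h0 := hcha n hn
    rwa [← List.append_assoc] at h0
  obtain ⟨z, hzY, hze⟩ := exists_endsAtZero_of_admissible hY haYadm
  obtain ⟨z₁, hz₁Y, hz₁le, hz₁c⟩ := extend_chain hY (aY ++ W) cY hcha' z hzY hze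
  set zh := shiftBy (N:ℤ) z₁ with hzh
  have hzhY : zh ∈ Y := mem_shiftBy hY _ hz₁Y
  -- values of z on its W-part
  have hsplit2 : aY ++ W = wordEnd z ((0:ℤ) - (m:ℕ)) aY.length ++ wordEnd z 0 m := by
    have h0 := endsAtZero_iff_eq.mp hze
    have hlen : (aY ++ W).length = aY.length + m := by simp [hW]
    rw [hlen] at h0
    rw [h0, wordEnd_append]
  have hWz : W = wordEnd z 0 m := (List.append_inj' hsplit2 (by simp [hW])).2
  have hzy : ∀ u : ℤ, 1 - (m:ℤ) ≤ u → u ≤ 0 → z u = yf (u + -(N:ℤ)) := by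
    intro u h1 h2
    have hW2 : wordEnd (shiftBy (-(N:ℤ)) yf) 0 m = W := by
      rw [wordEnd_shiftBy, zero_add, ← hW]
    have h3 := eq_on_of_wordEnd_eq (hWz.symm.trans hW2.symm) u (by omega) h2
    exact h3
  have F1a : ∀ i : ℤ, 1 - (m:ℤ) - N ≤ i → i ≤ -(N:ℤ) → zh i = yf i := by
    intro i h1 h2
    show z₁ (i + N) = yf i
    rw [hz₁le _ (by omega)]
    rw [hzy (i + N) (by omega) (by omega)]
    congr 1
    ring
  have F1b : ∀ i : ℤ, -(N:ℤ) < i → i ≤ (N:ℤ)+1 → zh i = yf i := by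
    intro i h1 h2
    show z₁ (i + N) = yf i
    have hn2 : (i + N - 1).toNat < cY.length := by rw [hclen]; omega
    have h3 := hz₁c (i + N - 1).toNat hn2
    have h4 : z₁ (i + N) = cY[(i + N - 1).toNat]'hn2 := by
      rw [← h3]; congr 1; omega
    rw [h4, hcval _ hn2]
    congr 1
    push_cast
    omega
  have F1 : ∀ i : ℤ, -(k1:ℤ) - 3*N ≤ i → i ≤ (N:ℤ)+1 → zh i = yf i := by
    intro i h1 h2
    rcases le_or_gt i (-(N:ℤ)) with h | h
    · exact F1a i (by omega) h
    · exact F1b i h h2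
  have FE' : EndsAtZero z₁ (aY ++ W) :=
    endsAtZero_congr (fun i _ h2 => (hz₁le i h2).symm) hze
  -- pull back
  set xh := (φ.symm ⟨zh, hzhY⟩).1 with hxh
  have hxhX : xh ∈ X := (φ.symm ⟨zh, hzhY⟩).2
  have F2 : ∀ i : ℤ, -(k1:ℤ) - 2*N ≤ i → i ≤ 1 → xh i = x₀ i := by
    intro i h1 h2
    have h3 := hbψ ⟨zh, hzhY⟩ (φ xs) i (fun u hu1 hu2 => F1 u (by omega) (by omega))
    rw [φ.symm_apply_apply] at h3
    exact h3
  set La := aY.length + m + 2*N + 1 with hLa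
  set aX := wordEnd xh (-(k1:ℤ)) La with haX
  have h_ab : aX ++ b = wordEnd xh 0 (La + k1) := by
    rw [wordEnd_append]
    have hpt : (0:ℤ) - (k1:ℕ) = -(k1:ℤ) := by push_cast; ring
    rw [hpt, ← haX]
    congr 1
    rw [hbx₀]
    exact wordEnd_congr (fun i h1 h2 => (F2 i (by omega) (by omega)).symm)
  refine ⟨aX, by rw [haX]; exact wordEnd_ne_nil _ _ (by omega), ?_, ?_⟩
  · rw [h_ab]; exact admissible_wordEnd hxhX _ _
  -- the omega1 membership
  intro x' hx'X hx'E
  have G0 : ∀ i : ℤ, 1 - ((La + k1:ℕ):ℤ) ≤ i → i ≤ 0 → x' i = xh i := by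
    have h0 := endsAtZero_iff_eq.mp hx'E
    have hlen : (aX ++ b).length = La + k1 := by simp [haX, hk1]
    rw [hlen] at h0
    exact eq_on_of_wordEnd_eq ((h0.symm.trans h_ab))
  set y' := (φ ⟨x', hx'X⟩).1 with hy'
  have hy'Y : y' ∈ Y := (φ ⟨x', hx'X⟩).2
  have G1 : ∀ i : ℤ, 1 - ((La + k1:ℕ):ℤ) + N ≤ i → i ≤ -(N:ℤ) → y' i = zh i := by
    intro i h1 h2
    have h3 := hbφ ⟨x', hx'X⟩ (φ.symm ⟨zh, hzhY⟩) i
      (fun u hu1 hu2 => G0 u (by omega) (by omega))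
    rw [φ.apply_symm_apply] at h3
    exact h3
  have G2 : EndsAtZero (shiftBy (-(N:ℤ)) y') (aY ++ W) := by
    refine endsAtZero_congr (fun i h1 h2 => ?_) FE'
    have hlen : ((aY ++ W).length : ℤ) = (aY.length : ℤ) + m := by
      rw [List.length_append, hW, length_wordEnd]; push_cast; ring
    rw [hlen] at h1
    show z₁ i = y' (i + -(N:ℤ))
    rw [G1 (i + -(N:ℤ)) (by omega) (by omega)]
    show z₁ i = z₁ (i + -(N:ℤ) + N)
    congr 1
    ring
  obtain ⟨v, hvY, hvle, hvc⟩ := extend_chain hY (aY ++ W) cY hcha'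
    (shiftBy (-(N:ℤ)) y') (mem_shiftBy hY _ hy'Y) G2
  set y'' := shiftBy (N:ℤ) v with hy''
  have hy''Y : y'' ∈ Y := mem_shiftBy hY _ hvY
  have H1 : ∀ i : ℤ, i ≤ -(N:ℤ) → y'' i = y' i := by
    intro i hi
    show v (i + N) = y' i
    rw [hvle _ (by omega)]
    show y' (i + N + -(N:ℤ)) = y' i
    congr 1
    ring
  have H2 : ∀ i : ℤ, -(N:ℤ) < i → i ≤ (N:ℤ)+1 → y'' i = yf i := by
    intro i h1 h2
    show v (i + N) = yf i
    have hn2 : (i + N - 1).toNat < cY.length := by rw [hclen]; omega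
    have h3 := hvc (i + N - 1).toNat hn2
    have h4 : v (i + N) = cY[(i + N - 1).toNat]'hn2 := by
      rw [← h3]; congr 1; omega
    rw [h4, hcval _ hn2]
    congr 1
    push_cast
    omega
  set x'' := (φ.symm ⟨y'', hy''Y⟩).1 with hx''
  have hx''X : x'' ∈ X := (φ.symm ⟨y'', hy''Y⟩).2
  have C1 : ∀ i : ℤ, i ≤ -(2*N:ℤ) → x'' i = x' i := by
    intro i hi
    have h3 := hbψ ⟨y'', hy''Y⟩ (φ ⟨x', hx'X⟩) i
      (fun u hu1 hu2 => H1 u (by omega))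
    rw [φ.symm_apply_apply] at h3
    exact h3
  have C2 : ∀ i : ℤ, -(2*N:ℤ) < i → i ≤ 1 → x'' i = x₀ i := by
    intro i h1 h2
    have h3 := hbψ ⟨y'', hy''Y⟩ (φ xs) i (fun u hu1 hu2 => ?_)
    · rw [φ.symm_apply_apply] at h3
      exact h3
    · show y'' u = yf u
      rcases le_or_gt u (-(N:ℤ)) with h | h
      · rw [H1 u h, G1 u (by omega) h]
        exact F1 u (by omega) (by omega)
      · exact H2 u h (by omega)
  have C4 : x'' 1 = σ := by
    rw [C2 1 (by omega) (by omega)]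
    exact hx₀σ
  refine ⟨x'', hx''X, ?_, ?_⟩
  · intro i hi
    rcases le_or_gt i (-(2*N:ℤ)) with h | h
    · exact C1 i h
    · rw [C2 i h (by omega)]
      rw [← F2 i (by omega) (by omega)]
      exact (G0 i (by omega) hi).symm
  · intro j
    have hj : (j : ℕ) = 0 := by
      have hlt := j.isLt
      simp only [List.length_singleton] at hlt
      omega
    rw [List.get_eq_getElem]
    simp only [hj]
    show x'' ((0:ℕ) + 1) = σ
    norm_num
    exact C4
end

section
/- Let X ⊆ Σ^ℤ be a subshift such that Γ₁⁺(x⁻) = Δ₁⁺(x⁻) for every x⁻ ∈ X⁻. Then there exists N ∈ ℕ such that Γ₁⁺(x⁻) ⊆ ω₁⁺((x_{-N},…,x_0)) for every x⁻ ∈ X⁻. -/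
open Set Filter Topology

/-!
The pairs `(x⁻, σ)` with `σ ∈ Γ₁⁺(x⁻)` form a compact set: the image of the compact subshift
under `x ↦ ((x_i)_{i ≤ 0}, x_1)`. Membership `σ ∈ ω₁⁺((x_{-n},…,x_0))` only depends on finitely
many coordinates, so these conditions cut out an increasing sequence of open sets, which by
hypothesis covers the compact set. Hence one of them already contains it.
-/

section

variable {A : Type*}

lemma endsAtZero_lastWord_iff (x : ℤ → A) (u : ℕ → A) (n : ℕ) :
    EndsAtZero x (lastWord u n) ↔ ∀ k ≤ n, x (-(k : ℤ)) = u k := by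
  simp only [EndsAtZero, lastWord, List.length_ofFn, List.get_ofFn]
  constructor
  · intro H k hk
    have := H ⟨n - k, by simp⟩
    simp only [Fin.val_cast] at this
    rw [show n - (n - k) = k by omega] at this
    convert this using 2
    push_cast [Nat.cast_sub hk]
    ring
  · intro H j
    have hj : (j : ℕ) ≤ n := Nat.lt_succ_iff.mp (by simpa using j.isLt)
    simp only [Fin.val_cast]
    rw [← H (n - j) (Nat.sub_le n j)]
    congr 1
    push_cast [Nat.cast_sub hj]
    ring

lemma omega1_lastWord_mono (X : Set (ℤ → A)) (u : ℕ → A) :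
    Monotone fun n => omega1 X (lastWord u n) := by
  intro n m hnm σ hσ x hx hx_ends
  rw [endsAtZero_lastWord_iff] at hx_ends
  exact hσ x hx ((endsAtZero_lastWord_iff x u n).2 fun k hk => hx_ends k (hk.trans hnm))

lemma isOpen_setOf_mem_omega1_lastWord [TopologicalSpace A] [DiscreteTopology A]
    (X : Set (ℤ → A)) (n : ℕ) :
    IsOpen {p : (ℕ → A) × A | p.2 ∈ omega1 X (lastWord p.1 n)} := by
  let window : (ℕ → A) × A → (Fin (n + 1) → A) × A :=
    fun p => (fun j => p.1 (n - (j : ℕ)), p.2)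
  have hwindow : Continuous window :=
    (continuous_pi fun j => (continuous_apply _).comp continuous_fst).prodMk continuous_snd
  exact (isOpen_discrete {q | q.2 ∈ omega1 X (List.ofFn q.1)}).preimage hwindow

lemma mem_Xminus_of_mem_Gamma1 {X : Set (ℤ → A)} {u : ℕ → A} {σ : A}
    (hσ : σ ∈ Gamma1 X u) : u ∈ Xminus X := by
  obtain ⟨x, hx, hxu, -⟩ := hσ
  exact ⟨x, hx, fun n => (hxu n).symm⟩

lemma isCompact_setOf_mem_Gamma1 [TopologicalSpace A] [Finite A] {X : Set (ℤ → A)}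
    (hX : IsClosed X) : IsCompact {p : (ℕ → A) × A | p.2 ∈ Gamma1 X p.1} := by
  have himage : {p : (ℕ → A) × A | p.2 ∈ Gamma1 X p.1} =
      (fun x : ℤ → A => (fun n : ℕ => x (-(n : ℤ)), x 1)) '' X := by
    ext ⟨u, σ⟩
    constructor
    · rintro ⟨x, hx, hxu, rfl⟩
      exact ⟨x, hx, by simp [funext hxu]⟩
    · rintro ⟨x, hx, hxp⟩
      simp only [Prod.mk.injEq] at hxp
      exact ⟨x, hx, fun n => by rw [← hxp.1], hxp.2⟩
  rw [himage]
  exact hX.isCompact.image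
    ((continuous_pi fun n => continuous_apply _).prodMk (continuous_apply 1))

end

theorem stmt14_general {A : Type*} [Fintype A] [TopologicalSpace A] [DiscreteTopology A]
    (X : Set (ℤ → A)) (hX : IsSubshift X)
    (h : ∀ u ∈ Xminus X, Gamma1 X u = Delta1 X u) :
    ∃ N : ℕ, ∀ u ∈ Xminus X, Gamma1 X u ⊆ omega1 X (lastWord u N) := by
  have hcover : {p : (ℕ → A) × A | p.2 ∈ Gamma1 X p.1} ⊆
      ⋃ n, {p | p.2 ∈ omega1 X (lastWord p.1 n)} := by
    rintro ⟨u, σ⟩ hσ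
    rw [mem_ofPred_eq, h u (mem_Xminus_of_mem_Gamma1 hσ), Delta1, mem_iUnion] at hσ
    exact mem_iUnion.2 hσ
  have hmono : Monotone fun n => {p : (ℕ → A) × A | p.2 ∈ omega1 X (lastWord p.1 n)} :=
    fun n m hnm p hp => omega1_lastWord_mono X p.1 hnm hp
  obtain ⟨N, hN⟩ := (isCompact_setOf_mem_Gamma1 hX.2.1).elim_directed_cover _
    (isOpen_setOf_mem_omega1_lastWord X) hcover hmono.directed_le
  exact ⟨N, fun u _ σ hσ => hN (show (u, σ) ∈ _ from hσ)⟩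

/-- from the proof of Corollary 2.2.  If `Γ₁⁺(x⁻) = Δ₁⁺(x⁻)` for every
`x⁻ ∈ X⁻`, then there is an `N` with `Γ₁⁺(x⁻) ⊆ ω₁⁺((x_{-N},…,x_0))` for all `x⁻ ∈ X⁻`. -/
theorem stmt14 {A : Type*} [Fintype A] [Nonempty A] [TopologicalSpace A] [DiscreteTopology A]
    (X : Set (ℤ → A)) (hX : IsSubshift X)
    (h : ∀ u ∈ Xminus X, Gamma1 X u = Delta1 X u) :
    ∃ N : ℕ, ∀ u ∈ Xminus X, Gamma1 X u ⊆ omega1 X (lastWord u N) :=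
  stmt14_general X hX h
end
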